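/- Let n = 5 and suppose L is generic, satisfies the triangle inequality, the sets {1, 2} and {1, 5} are long, and every two-element subset of {2, 3, 4, 5} is short. Then ({4,5}, {1}, {2,3}) and ({2,3}, {1}, {4,5}) are vertices of Γ(L), and they are joined by a path in Γ(L) of length 4. -/

import Mathlib

/-
The path, in the paper's indexing, runs through the cyclic partitions
(23|45|1) – (234|5|1) – (34|25|1) – (345|2|1) – (45|23|1), which represent the
two given vertices. Each edge moves a single element out of a three-element part;
these three-element parts are short because their complements {1,5} and {1,2} are
long, and the two-element parts are short by hypothesis.
-/

open Finset

/-- `I ⊆ [n]` is *short*: the sum of its lengths is less than that of its complement. -/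
def ShortSet {n : ℕ} (L : Fin n → ℝ) (I : Finset (Fin n)) : Prop :=
  ∑ i ∈ I, L i < ∑ i ∈ Iᶜ, L i

/-- `I ⊆ [n]` is *long*: the sum of its lengths is greater than that of its complement. -/
def LongSet {n : ℕ} (L : Fin n → ℝ) (I : Finset (Fin n)) : Prop :=
  ∑ i ∈ Iᶜ, L i < ∑ i ∈ I, L i

/-- The length vector `L` is *generic*. -/
def GenericVec {n : ℕ} (L : Fin n → ℝ) : Prop :=
  ∀ I : Finset (Fin n), ∑ i ∈ I, L i ≠ ∑ i ∈ Iᶜ, L i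

/-- `L` satisfies the triangle inequality: every singleton is short. -/
def TriangleIneq {n : ℕ} (L : Fin n → ℝ) : Prop :=
  ∀ i : Fin n, ShortSet L {i}

/-- Ordered triples of subsets of `[n]`. -/
abbrev LTriple (n : ℕ) := Finset (Fin n) × Finset (Fin n) × Finset (Fin n)

/-- An ordered triple `(I, J, K)` representing a vertex of `Γ(L)`: three pairwise
disjoint nonempty short sets whose union is `[n]`. -/
def IsVertex {n : ℕ} (L : Fin n → ℝ) (V : LTriple n) : Prop :=
  V.1.Nonempty ∧ V.2.1.Nonempty ∧ V.2.2.Nonempty ∧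
  ShortSet L V.1 ∧ ShortSet L V.2.1 ∧ ShortSet L V.2.2 ∧
  Disjoint V.1 V.2.1 ∧ Disjoint V.1 V.2.2 ∧ Disjoint V.2.1 V.2.2 ∧
  V.1 ∪ V.2.1 ∪ V.2.2 = Finset.univ

/-- Cyclic rotation of an ordered triple. -/
def rotT {n : ℕ} (V : LTriple n) : LTriple n := (V.2.1, V.2.2, V.1)

/-- Two ordered triples represent the same cyclically ordered partition
(`(I,J,K)`, `(J,K,I)` and `(K,I,J)` are identified). -/
def CyclEq {n : ℕ} (V W : LTriple n) : Prop :=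
  W = V ∨ W = rotT V ∨ W = rotT (rotT V)

/-- The mirror image of the vertex `(I, J, K)` is the vertex `(J, I, K)`. -/
def mirrorT {n : ℕ} (V : LTriple n) : LTriple n := (V.2.1, V.1, V.2.2)

/-- The elementary move on representatives: shift a nonempty proper subset
`S ⊊ I` to the second part, provided `J ∪ S` stays short. -/
def MoveStep {n : ℕ} (L : Fin n → ℝ) (V W : LTriple n) : Prop :=
  ∃ S : Finset (Fin n), S.Nonempty ∧ S ⊂ V.1 ∧ ShortSet L (V.2.1 ∪ S) ∧
    W = (V.1 \ S, V.2.1 ∪ S, V.2.2)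

/-- Adjacency in `Γ(L)`: one of the two vertices has a representative from which an
elementary move leads to a representative of the other. -/
def GammaAdj {n : ℕ} (L : Fin n → ℝ) (V W : LTriple n) : Prop :=
  (∃ V' W' : LTriple n, CyclEq V V' ∧ MoveStep L V' W' ∧ CyclEq W W') ∨
  (∃ W' V' : LTriple n, CyclEq W W' ∧ MoveStep L W' V' ∧ CyclEq V V')

/-- There is a path of length `m` (i.e. with `m` consecutive edges) in `Γ(L)`
from the vertex `V` to the vertex `W`. -/
def GammaPath {n : ℕ} (L : Fin n → ℝ) (m : ℕ) (V W : LTriple n) : Prop :=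
  ∃ f : ℕ → LTriple n, CyclEq V (f 0) ∧ CyclEq W (f m) ∧
    (∀ i ≤ m, IsVertex L (f i)) ∧ ∀ i < m, GammaAdj L (f i) (f (i + 1))

theorem LongSet.shortSet_compl {n : ℕ} {L : Fin n → ℝ} {I : Finset (Fin n)}
    (h : LongSet L I) : ShortSet L Iᶜ := by
  rwa [ShortSet, compl_compl]

section Vertices

variable {n : ℕ} {L : Fin n → ℝ}

theorem isVertex_of_shortSet {I J K : Finset (Fin n)}
    (hI : ShortSet L I) (hJ : ShortSet L J) (hK : ShortSet L K)
    (hpart : I.Nonempty ∧ J.Nonempty ∧ K.Nonempty ∧ Disjoint I J ∧ Disjoint I K ∧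
      Disjoint J K ∧ I ∪ J ∪ K = univ) :
    IsVertex L (I, J, K) := by
  obtain ⟨hIne, hJne, hKne, hIJ, hIK, hJK, hunion⟩ := hpart
  exact ⟨hIne, hJne, hKne, hI, hJ, hK, hIJ, hIK, hJK, hunion⟩

theorem MoveStep.intro {I J K I' J' : Finset (Fin n)} (S : Finset (Fin n))
    (hS : S.Nonempty) (hSI : S ⊂ I) (hI' : I \ S = I') (hJ' : J ∪ S = J')
    (hshort : ShortSet L J') :
    MoveStep L (I, J, K) (I', J', K) :=
  ⟨S, hS, hSI, hJ' ▸ hshort, by rw [hI', hJ']⟩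

end Vertices

section CyclicEquivalence

variable {n : ℕ} {U V W : LTriple n}

theorem rotT_rotT_rotT (V : LTriple n) : rotT (rotT (rotT V)) = V := rfl

theorem CyclEq.refl (V : LTriple n) : CyclEq V V := Or.inl rfl

theorem cyclEq_rotT_rotT (V : LTriple n) : CyclEq V (rotT (rotT V)) := Or.inr (Or.inr rfl)

theorem CyclEq.symm (h : CyclEq V W) : CyclEq W V := by
  rcases h with rfl | rfl | rfl
  · exact .refl _
  · exact cyclEq_rotT_rotT _
  · exact Or.inr (Or.inl rfl)

theorem CyclEq.trans (h : CyclEq U V) (h' : CyclEq V W) : CyclEq U W := by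
  unfold CyclEq at *
  rcases h with rfl | rfl | rfl <;> rcases h' with rfl | rfl | rfl <;>
    simp only [rotT_rotT_rotT, true_or, or_true]

end CyclicEquivalence

section Adjacency

variable {n : ℕ} {L : Fin n → ℝ} {V V' W : LTriple n}

theorem GammaAdj.of_moveStep (h : MoveStep L V W) : GammaAdj L V W :=
  Or.inl ⟨V, W, .refl V, h, .refl W⟩

theorem GammaAdj.symm (h : GammaAdj L V W) : GammaAdj L W V := Or.symm h

theorem GammaAdj.congr_left (hV : CyclEq V V') (h : GammaAdj L V W) : GammaAdj L V' W := by
  rcases h with ⟨V₁, W₁, hV₁, hmove, hW₁⟩ | ⟨W₁, V₁, hW₁, hmove, hV₁⟩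
  · exact Or.inl ⟨V₁, W₁, hV.symm.trans hV₁, hmove, hW₁⟩
  · exact Or.inr ⟨W₁, V₁, hW₁, hmove, hV.symm.trans hV₁⟩

end Adjacency

namespace GammaPath

variable {n : ℕ} {L : Fin n → ℝ} {m : ℕ} {U V W V' W' : LTriple n}

theorem nil (hV : IsVertex L V) : GammaPath L 0 V V :=
  ⟨fun _ => V, .refl V, .refl V, fun _ _ => hV, fun _ hi => absurd hi (Nat.not_lt_zero _)⟩

theorem cons (hU : IsVertex L U) (hUV : GammaAdj L U V) (h : GammaPath L m V W) :
    GammaPath L (m + 1) U W := by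
  obtain ⟨f, hf0, hfm, hvert, hadj⟩ := h
  refine ⟨fun | 0 => U | i + 1 => f i, .refl U, hfm, ?_, ?_⟩
  · rintro (_ | i) hi
    exacts [hU, hvert i (by omega)]
  · rintro (_ | i) hi
    exacts [(hUV.symm.congr_left hf0).symm, hadj i (by omega)]

theorem of_cyclEq (hV : CyclEq V V') (hW : CyclEq W W') (h : GammaPath L m V' W') :
    GammaPath L m V W := by
  obtain ⟨f, hf0, hfm, hvert, hadj⟩ := h
  exact ⟨f, hV.trans hf0, hW.trans hfm, hvert, hadj⟩

end GammaPath

-- Indices `1, …, 5` of the paper are `0, …, 4` in `Fin 5`.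
theorem pentagon_inside_out_general (L : Fin 5 → ℝ)
    (htri : TriangleIneq L)
    (h12 : LongSet L {0, 1}) (h15 : LongSet L {0, 4})
    (hshort : ∀ i j : Fin 5, i ≠ j → i ≠ 0 → j ≠ 0 → ShortSet L {i, j}) :
    IsVertex L (({3, 4}, {0}, {1, 2}) : LTriple 5) ∧
    IsVertex L (({1, 2}, {0}, {3, 4}) : LTriple 5) ∧
    GammaPath L 4 (({3, 4}, {0}, {1, 2}) : LTriple 5) (({1, 2}, {0}, {3, 4}) : LTriple 5) := by
  have s12 := hshort 1 2 (by decide) (by decide) (by decide)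
  have s14 := hshort 1 4 (by decide) (by decide) (by decide)
  have s23 := hshort 2 3 (by decide) (by decide) (by decide)
  have s34 := hshort 3 4 (by decide) (by decide) (by decide)
  have s123 : ShortSet L {1, 2, 3} := by convert h15.shortSet_compl using 2; decide
  have s234 : ShortSet L {2, 3, 4} := by convert h12.shortSet_compl using 2; decide
  have e₀₁ : GammaAdj L ({1, 2}, {3, 4}, {0}) ({1, 2, 3}, {4}, {0}) :=
    .symm <| .of_moveStep <| .intro {3} (by decide) (by decide) (by decide) (by decide) s34
  have e₁₂ : GammaAdj L ({1, 2, 3}, {4}, {0}) ({2, 3}, {1, 4}, {0}) :=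
    .of_moveStep <| .intro {1} (by decide) (by decide) (by decide) (by decide) s14
  have e₂₃ : GammaAdj L ({2, 3}, {1, 4}, {0}) ({2, 3, 4}, {1}, {0}) :=
    .symm <| .of_moveStep <| .intro {4} (by decide) (by decide) (by decide) (by decide) s14
  have e₃₄ : GammaAdj L ({2, 3, 4}, {1}, {0}) ({3, 4}, {1, 2}, {0}) :=
    .of_moveStep <| .intro {2} (by decide) (by decide) (by decide) (by decide) s12
  refine ⟨isVertex_of_shortSet s34 (htri 0) s12 (by decide),
    isVertex_of_shortSet s12 (htri 0) s34 (by decide),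
    .of_cyclEq (cyclEq_rotT_rotT _) (cyclEq_rotT_rotT _) ?_⟩
  exact .cons (isVertex_of_shortSet s12 s34 (htri 0) (by decide)) e₀₁ <|
    .cons (isVertex_of_shortSet s123 (htri 4) (htri 0) (by decide)) e₁₂ <|
    .cons (isVertex_of_shortSet s23 s14 (htri 0) (by decide)) e₂₃ <|
    .cons (isVertex_of_shortSet s234 (htri 1) (htri 0) (by decide)) e₃₄ <|
    .nil (isVertex_of_shortSet s34 s12 (htri 0) (by decide))

/-- (Turning a pentagon inside out.) Let `n = 5`, `L` generic with the
triangle inequality, `{1,2}` and `{1,5}` long, and every two-element subset of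
`{2,3,4,5}` short (indices `1,…,5` are `0,…,4` in `Fin 5`). Then `({4,5},{1},{2,3})`
and `({2,3},{1},{4,5})` are vertices of `Γ(L)`, joined by a path of length 4. -/
theorem pentagon_inside_out (L : Fin 5 → ℝ)
    (hpos : ∀ i, 0 < L i) (hgen : GenericVec L) (htri : TriangleIneq L)
    (h12 : LongSet L {0, 1}) (h15 : LongSet L {0, 4})
    (hshort : ∀ i j : Fin 5, i ≠ j → i ≠ 0 → j ≠ 0 → ShortSet L {i, j}) :
    IsVertex L (({3, 4}, {0}, {1, 2}) : LTriple 5) ∧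
    IsVertex L (({1, 2}, {0}, {3, 4}) : LTriple 5) ∧
    GammaPath L 4 (({3, 4}, {0}, {1, 2}) : LTriple 5) (({1, 2}, {0}, {3, 4}) : LTriple 5) :=
  pentagon_inside_out_general L htri h12 h15 hshort
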